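/- Let (p_k) be a sequence of integers with p_k ≥ 2 and p_k^3 ≤ p_{k+1} ≤ p_k^3 + p_k^{63/40} for all k, and suppose additionally that p_2 ≠ p_1^3. Let w = lim p_k^{1/3^k}. Then w is not an integer. -/

import Mathlib

/-!
Put `A k = p_k ^ (1/3^k)` and `B k = (p_k + 1) ^ (1/3^k)`. The lower bound `p_k^3 ≤ p_{k+1}` makes
`A` nondecreasing, and the upper bound gives `p_{k+1} + 1 < (p_k + 1)^3`, so `B` is strictly
decreasing. Hence `A k ≤ w < B k`, i.e. `⌊w ^ 3^k⌋ = p_k`. If `w = n` were an integer this would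
force `p_k = n ^ 3^k`, and then `p_2 = n^9 = p_1^3`.
-/

open Filter Topology

section MillsConstant

variable {b : ℕ} {x : ℝ}

lemma Real.pow_rpow_one_div_pow_succ (hx : 0 ≤ x) (hb : b ≠ 0) (k : ℕ) :
    (x ^ b) ^ ((1 : ℝ) / (b : ℝ) ^ (k + 1)) = x ^ ((1 : ℝ) / (b : ℝ) ^ k) := by
  rw [← Real.rpow_natCast x b, ← Real.rpow_mul hx]
  congr 1
  field_simp
  ring

lemma Real.rpow_one_div_pow_pow (hx : 0 ≤ x) (hb : b ≠ 0) (k : ℕ) :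
    (x ^ ((1 : ℝ) / (b : ℝ) ^ k)) ^ (b ^ k) = x := by
  simpa [one_div] using Real.rpow_inv_natCast_pow hx (pow_ne_zero k hb)

variable {a : ℕ → ℝ} {w : ℝ}

theorem le_pow_and_pow_lt_succ_of_tendsto (hb : b ≠ 0) (ha : ∀ k ≥ 1, 0 ≤ a k)
    (hlow : ∀ k ≥ 1, a k ^ b ≤ a (k + 1)) (hupp : ∀ k ≥ 1, a (k + 1) + 1 < (a k + 1) ^ b)
    (hw : Tendsto (fun k => a k ^ ((1 : ℝ) / (b : ℝ) ^ k)) atTop (𝓝 w)) {k : ℕ} (hk : 1 ≤ k) :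
    a k ≤ w ^ b ^ k ∧ w ^ b ^ k < a k + 1 := by
  set A : ℕ → ℝ := fun k => a k ^ ((1 : ℝ) / (b : ℝ) ^ k)
  set B : ℕ → ℝ := fun k => (a k + 1) ^ ((1 : ℝ) / (b : ℝ) ^ k)
  have hA_mono : MonotoneOn A (Set.Ici 1) := monotoneOn_nat_Ici_of_le_succ fun j hj => by
    calc A j = (a j ^ b) ^ ((1 : ℝ) / (b : ℝ) ^ (j + 1)) :=
          (Real.pow_rpow_one_div_pow_succ (ha j hj) hb j).symm
      _ ≤ A (j + 1) := Real.rpow_le_rpow (pow_nonneg (ha j hj) b) (hlow j hj) (by positivity)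
  have hB_lt : ∀ j ≥ 1, B (j + 1) < B j := fun j hj => by
    calc B (j + 1) < ((a j + 1) ^ b) ^ ((1 : ℝ) / (b : ℝ) ^ (j + 1)) :=
          Real.rpow_lt_rpow (by linarith [ha (j + 1) (by omega)]) (hupp j hj) (by positivity)
      _ = B j := Real.pow_rpow_one_div_pow_succ (by linarith [ha j hj]) hb j
  have hB_anti : AntitoneOn B (Set.Ici 1) :=
    antitoneOn_nat_Ici_of_succ_le fun j hj => (hB_lt j hj).le
  have hA_le_B : ∀ j ≥ 1, A j ≤ B j := fun j hj => by
    simp only [A, B]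
    gcongr
    exacts [ha j hj, by linarith]
  have hA_le_w : A k ≤ w :=
    ge_of_tendsto hw (eventually_atTop.2 ⟨k, fun m hm => hA_mono hk (hk.trans hm) hm⟩)
  have hw_le_B : ∀ j ≥ 1, w ≤ B j := fun j hj =>
    le_of_tendsto hw (eventually_atTop.2 ⟨j, fun m hm =>
      (hA_le_B m (hj.trans hm)).trans (hB_anti hj (hj.trans hm) hm)⟩)
  have hw_lt_B : w < B k := (hw_le_B (k + 1) (by omega)).trans_lt (hB_lt k hk)
  have hA_nonneg : 0 ≤ A k := Real.rpow_nonneg (ha k hk) _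
  constructor
  · calc a k = A k ^ b ^ k := (Real.rpow_one_div_pow_pow (ha k hk) hb k).symm
      _ ≤ w ^ b ^ k := by gcongr
  · calc w ^ b ^ k < B k ^ b ^ k :=
          pow_lt_pow_left₀ hw_lt_B (hA_nonneg.trans hA_le_w) (pow_ne_zero k hb)
      _ = a k + 1 := Real.rpow_one_div_pow_pow (by linarith [ha k hk]) hb k

end MillsConstant

lemma succ_lt_add_one_pow_three_of_le {x y : ℝ} (hx : 1 ≤ x)
    (hy : y ≤ x ^ 3 + x ^ ((63 : ℝ) / 40)) : y + 1 < (x + 1) ^ 3 := by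
  have hsq : x ^ ((63 : ℝ) / 40) ≤ x ^ 2 := by
    rw [← Real.rpow_two]
    exact Real.rpow_le_rpow_of_exponent_le hx (by norm_num)
  nlinarith

open Filter in
theorem stmt4 (p : ℕ → ℤ) (hp : ∀ k ≥ 1, 2 ≤ p k)
    (hrec : ∀ k ≥ 1, p k ^ 3 ≤ p (k + 1) ∧
      (p (k + 1) : ℝ) ≤ (p k : ℝ) ^ 3 + (p k : ℝ) ^ ((63 : ℝ) / 40))
    (hne : p 2 ≠ p 1 ^ 3)
    (w : ℝ) (hw : Tendsto (fun k => (p k : ℝ) ^ ((1 : ℝ) / 3 ^ k)) atTop (nhds w)) :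
    ¬ ∃ n : ℤ, w = (n : ℝ) := by
  rintro ⟨n, rfl⟩
  have hp_one : ∀ k ≥ 1, (1 : ℝ) ≤ p k := fun k hk => by
    exact_mod_cast (hp k hk).trans' one_le_two
  have hp_eq : ∀ k ≥ 1, p k = n ^ 3 ^ k := fun k hk => by
    obtain ⟨hle, hlt⟩ := le_pow_and_pow_lt_succ_of_tendsto (b := 3) (a := fun k => (p k : ℝ))
      three_ne_zero (fun k hk => zero_le_one.trans (hp_one k hk))
      (fun k hk => by exact_mod_cast (hrec k hk).1)
      (fun k hk => succ_lt_add_one_pow_three_of_le (hp_one k hk) (hrec k hk).2)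
      (by exact_mod_cast hw) hk
    have hle' : p k ≤ n ^ 3 ^ k := by exact_mod_cast hle
    have hlt' : n ^ 3 ^ k < p k + 1 := by exact_mod_cast hlt
    omega
  apply hne
  rw [hp_eq 1 le_rfl, hp_eq 2 (by norm_num), ← pow_mul]
  norm_num
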